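/- Let ≻_NE be a Nash equilibrium strategy profile of an accomplice manipulation game with strategic pairs P ⊆ M × W, and let μ be the DA matching on ≻_NE. Then no pair in P blocks μ with respect to the true preferences; equivalently, μ is ((M × W) \ P)-stable, i.e., every blocking pair of μ (with respect to the true preferences) lies outside P. -/

import Mathlib

open Classical

/-- A strict preference list over `Fin n`, encoded as a permutation whose inverse
gives the rank of each alternative (lower rank = more preferred). -/
abbrev Pref (n : ℕ) := Equiv.Perm (Fin n)

/-- A profile of preference lists, one for each of the `n` agents on one side. -/
abbrev Profile (n : ℕ) := Fin n → Pref n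

/-- `a` is strictly preferred to `b` under the list `p`. -/
def SPref {n : ℕ} (p : Pref n) (a b : Fin n) : Prop := p.symm a < p.symm b

/-- `a` is weakly preferred to `b` under the list `p`. -/
def WPref {n : ℕ} (p : Pref n) (a b : Fin n) : Prop := p.symm a ≤ p.symm b

/-- A matching: a bijection from men to women. -/
abbrev Matching (n : ℕ) := Fin n ≃ Fin n

/-- `(m, w)` is a blocking pair of `μ` w.r.t. men's profile `mp` and women's profile `wp`. -/
def Blocks {n : ℕ} (mp wp : Profile n) (μ : Matching n) (m w : Fin n) : Prop :=
  SPref (mp m) w (μ m) ∧ SPref (wp w) m (μ.symm w)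

/-- A matching is stable if it admits no blocking pair. -/
def IsStable {n : ℕ} (mp wp : Profile n) (μ : Matching n) : Prop :=
  ∀ m w, ¬ Blocks mp wp μ m w

instance {n : ℕ} : Nonempty (Matching n) := ⟨Equiv.refl _⟩

/-- The outcome of the men-proposing Deferred Acceptance algorithm, specified as
the (unique) man-optimal stable matching of the instance `⟨mp, wp⟩`. -/
noncomputable def DA {n : ℕ} (mp wp : Profile n) : Matching n :=
  Classical.epsilon fun μ => IsStable mp wp μ ∧
    ∀ μ' : Matching n, IsStable mp wp μ' → ∀ m, WPref (mp m) (μ m) (μ' m)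

/-- An accomplice manipulation at strategy profile `p` (men's reports; women truthful
with profile `wp`) by the pair `(m, w)`, via misreport `q` of man `m`: woman `w`
strictly benefits and man `m` is not worse off, w.r.t. the true profiles `mp`, `wp`. -/
def AccManip {n : ℕ} (mp wp : Profile n) (p : Profile n) (m w : Fin n) (q : Pref n) : Prop :=
  SPref (wp w) ((DA (Function.update p m q) wp).symm w) ((DA p wp).symm w) ∧
  WPref (mp m) (DA (Function.update p m q) wp m) (DA p wp m)

/-- `p` is a Nash equilibrium of the accomplice manipulation game with strategic pairs `P`. -/
def IsNE {n : ℕ} (mp wp : Profile n) (P : Set (Fin n × Fin n)) (p : Profile n) : Prop :=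
  ∀ m w, (m, w) ∈ P → ¬ ∃ q, AccManip mp wp p m w q

/-- `q` results from the list `cur` by a push-up of the set `X` above `star`
(= the current DA partner): the set of women ranked above `star` in `q` is exactly
the set of those ranked above `star` in `cur` together with `X`. -/
def IsPushUp {n : ℕ} (cur : Pref n) (star : Fin n) (X : Set (Fin n)) (q : Pref n) : Prop :=
  ∀ w, SPref q w star ↔ (SPref cur w star ∨ w ∈ X)

/-- One step of the push-up dynamic: some strategic pair `(m, w) ∈ P` performs a
no-regret push-up accomplice manipulation at profile `p`, yielding `p'`. -/
def PushUpStep {n : ℕ} (mp wp : Profile n) (P : Set (Fin n × Fin n))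
    (p p' : Profile n) : Prop :=
  ∃ m w, (m, w) ∈ P ∧ ∃ X q,
    X ⊆ {w' | SPref (p m) (DA p wp m) w'} ∧
    IsPushUp (p m) (DA p wp m) X q ∧
    p' = Function.update p m q ∧
    SPref (wp w) ((DA p' wp).symm w) ((DA p wp).symm w) ∧
    WPref (mp m) (DA p' wp m) (DA p wp m)

/-- A push-up dynamic: starts at the truthful profile, and at each step performs a
no-regret push-up accomplice manipulation by some strategic pair if one exists,
otherwise stays put. -/
def IsPushUpDynamic {n : ℕ} (mp wp : Profile n) (P : Set (Fin n × Fin n))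
    (p : ℕ → Profile n) : Prop :=
  p 0 = mp ∧ ∀ t,
    PushUpStep mp wp P (p t) (p (t + 1)) ∨
    (p (t + 1) = p t ∧ ¬ ∃ p', PushUpStep mp wp P (p t) p')

/-- A one-for-many manipulation at profile `p` by man `m` for beneficiary set `B`,
via misreport `q`: every woman in `B` weakly benefits, some woman in `B` strictly
benefits, and `m` is not worse off (true preferences). -/
def OFMManip {n : ℕ} (mp wp : Profile n) (p : Profile n) (m : Fin n)
    (B : Set (Fin n)) (q : Pref n) : Prop :=
  (∀ w ∈ B, WPref (wp w) ((DA (Function.update p m q) wp).symm w) ((DA p wp).symm w)) ∧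
  (∃ w ∈ B, SPref (wp w) ((DA (Function.update p m q) wp).symm w) ((DA p wp).symm w)) ∧
  WPref (mp m) (DA (Function.update p m q) wp m) (DA p wp m)

/-- Nash equilibrium of the one-for-many manipulation game with strategic men `Pm`
and beneficiary sets `B`. -/
def IsNEOFM {n : ℕ} (mp wp : Profile n) (Pm : Set (Fin n)) (B : Fin n → Set (Fin n))
    (p : Profile n) : Prop :=
  ∀ m ∈ Pm, ¬ ∃ q, OFMManip mp wp p m (B m) q

/-- `q` is obtained from `cur` by promoting (weakly moving up) exactly one man `a`,
leaving the relative order of all other men unchanged. -/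
def Inconspicuous {n : ℕ} (cur q : Pref n) : Prop :=
  ∃ a, (∀ x y, x ≠ a → y ≠ a → (SPref q x y ↔ SPref cur x y)) ∧
    (∀ x, SPref cur a x → SPref q a x)

/-- One step of the inconspicuous dynamic for the woman self-manipulation game:
some strategic woman `w ∈ Pw` performs an optimal inconspicuous self-manipulation
in the current instance `⟨mp, pw⟩`. -/
def InconspicuousStep {n : ℕ} (mp : Profile n) (Pw : Set (Fin n))
    (pw pw' : Profile n) : Prop :=
  ∃ w ∈ Pw, ∃ q,
    pw' = Function.update pw w q ∧
    Inconspicuous (pw w) q ∧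
    SPref (pw w) ((DA mp pw').symm w) ((DA mp pw).symm w) ∧
    ∀ q', WPref (pw w) ((DA mp pw').symm w) ((DA mp (Function.update pw w q')).symm w)

/-- The inconspicuous dynamic of the woman self-manipulation game: starts at the
truthful profile `wp`, and at each step performs an optimal inconspicuous
self-manipulation by some strategic woman if one exists, otherwise stays put. -/
def IsInconspicuousDynamic {n : ℕ} (mp wp : Profile n) (Pw : Set (Fin n))
    (pw : ℕ → Profile n) : Prop :=
  pw 0 = wp ∧ ∀ t,
    InconspicuousStep mp Pw (pw t) (pw (t + 1)) ∨
    (pw (t + 1) = pw t ∧ ¬ ∃ pw', InconspicuousStep mp Pw (pw t) pw')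

/-!
Let `(m, w) ∈ P` block `μ = DA p wp`, and let `m` report his list with `w` moved to the top;
call the new DA matching `ν`. If `ν m = w`, both `m` and `w` gain. Otherwise `w` rejects `m`
at `ν`, so `ν` is stable for the old reports as well, and by man-optimality of `μ` every man
weakly prefers `μ` to `ν` under the new reports. If `ν m ≠ μ m`, the blocking lemma of Gale and
Sotomayor gives a blocking pair `(u, y)` of `μ` under the new reports with `μ u = ν u`; as `μ` is
stable for the old reports, `u = m`, a contradiction. So `m` keeps his partner, while `w` gains
since `ν⁻¹ w ≻_w m ≻_w μ⁻¹ w`.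
-/

section

open Function

variable {n : ℕ}

section Preferences

variable {p : Pref n} {a b c : Fin n}

lemma wpref_refl (p : Pref n) (a : Fin n) : WPref p a a := le_rfl

lemma SPref.wpref (h : SPref p a b) : WPref p a b := le_of_lt h

lemma SPref.trans (h₁ : SPref p a b) (h₂ : SPref p b c) : SPref p a c := lt_trans h₁ h₂

lemma SPref.asymm (h : SPref p a b) : ¬ SPref p b a := lt_asymm h

lemma SPref.ne (h : SPref p a b) : a ≠ b := by
  rintro rfl
  exact lt_irrefl _ h

lemma WPref.antisymm (h₁ : WPref p a b) (h₂ : WPref p b a) : a = b :=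
  p.symm.injective (le_antisymm h₁ h₂)

lemma WPref.spref_of_ne (h : WPref p a b) (hne : a ≠ b) : SPref p a b :=
  lt_of_le_of_ne h (p.symm.injective.ne hne)

lemma spref_or_spref_of_ne (hne : a ≠ b) : SPref p a b ∨ SPref p b a :=
  lt_or_gt_of_ne (p.symm.injective.ne hne)

end Preferences

lemma IsStable.spref_symm {L wp : Profile n} {ρ : Matching n} (hρ : IsStable L wp ρ)
    {x y : Fin n} (h : SPref (L x) y (ρ x)) : SPref (wp y) (ρ.symm y) x :=
  WPref.spref_of_ne (not_lt.mp fun h' => hρ x y ⟨h, h'⟩) fun hxy => h.ne (ρ.symm_apply_eq.mp hxy)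

/- A state `s : Fin n → ℕ` of the men-proposing Gale–Shapley algorithm records for each man `x`
how many women have rejected him: he is proposing to the woman of rank `s x` on his list `L x`.
A step lets a woman reject one of her proposers who is dominated by another. -/
namespace GaleShapley

variable (L wp : Profile n)

def Proposes (s : Fin n → ℕ) (x y : Fin n) : Prop := ((L x).symm y : ℕ) = s x

def Contested (s : Fin n → ℕ) (z : Fin n) : Prop :=
  ∃ x y, Proposes L s x y ∧ Proposes L s z y ∧ SPref (wp y) x z

def Terminal (s : Fin n → ℕ) : Prop := ∀ z, ¬ Contested L wp s z

noncomputable def step (s : Fin n → ℕ) : Fin n → ℕ :=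
  if h : ∃ z, Contested L wp s z then update s h.choose (s h.choose + 1) else s

noncomputable def run (t : ℕ) : Fin n → ℕ := (step L wp)^[t] 0

def RejectionsJustified (s : Fin n → ℕ) : Prop :=
  ∀ x y, ((L x).symm y : ℕ) < s x → ∃ z, Proposes L s z y ∧ SPref (wp y) z x

variable {L wp} {s : Fin n → ℕ}

lemma Proposes.unique {z y y' : Fin n} (h : Proposes L s z y) (h' : Proposes L s z y') :
    y = y' :=
  (L z).symm.injective (Fin.ext (h.trans h'.symm))

lemma Terminal.proposes_inj (hs : Terminal L wp s) {x x' y : Fin n} (hx : Proposes L s x y)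
    (hx' : Proposes L s x' y) : x = x' := by
  by_contra hne
  rcases spref_or_spref_of_ne (p := wp y) hne with h | h
  · exact hs x' ⟨x, y, hx, hx', h⟩
  · exact hs x ⟨x', y, hx', hx, h⟩

lemma exists_step_eq_update (h : ¬ Terminal L wp s) :
    ∃ z, Contested L wp s z ∧ step L wp s = update s z (s z + 1) := by
  have hc : ∃ z, Contested L wp s z := by simpa [Terminal] using h
  exact ⟨hc.choose, hc.choose_spec, dif_pos hc⟩

lemma step_eq_self (h : Terminal L wp s) : step L wp s = s :=
  dif_neg fun ⟨z, hz⟩ => h z hz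

lemma le_step (s : Fin n → ℕ) : s ≤ step L wp s := by
  by_cases h : Terminal L wp s
  · rw [step_eq_self h]
  · obtain ⟨z, -, hstep⟩ := exists_step_eq_update h
    intro x
    rw [hstep]
    by_cases hx : x = z
    · subst hx; simp
    · simp [update_of_ne hx]

lemma eq_of_step_apply_ne {x x' : Fin n} (hx : step L wp s x ≠ s x)
    (hx' : step L wp s x' ≠ s x') : x = x' := by
  by_cases h : Terminal L wp s
  · exact absurd (by rw [step_eq_self h]) hx
  · obtain ⟨z, -, hstep⟩ := exists_step_eq_update h
    rw [hstep] at hx hx'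
    have hxz : x = z := by_contra fun hne => hx (update_of_ne hne _ _)
    have hx'z : x' = z := by_contra fun hne => hx' (update_of_ne hne _ _)
    rw [hxz, hx'z]

lemma rejectionsJustified_step (hs : RejectionsJustified L wp s) :
    RejectionsJustified L wp (step L wp s) := by
  by_cases h : Terminal L wp s
  · rwa [step_eq_self h]
  obtain ⟨z, ⟨x, y, hx, hz, hxz⟩, hstep⟩ := exists_step_eq_update h
  have keeps : ∀ {u y'}, u ≠ z → Proposes L s u y' → Proposes L (step L wp s) u y' := by
    intro u y' hu h
    rwa [hstep, Proposes, update_of_ne hu]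
  have hxz' : x ≠ z := hxz.ne
  intro x' y' hlt
  rw [hstep] at hlt
  by_cases hnew : x' = z ∧ ((L x').symm y' : ℕ) = s z
  · obtain ⟨rfl, hy'⟩ := hnew
    obtain rfl : y = y' := hz.unique hy'
    exact ⟨x, keeps hxz' hx, hxz⟩
  have hlt' : ((L x').symm y' : ℕ) < s x' := by
    by_cases hx' : x' = z
    · subst hx'
      rw [update_self] at hlt
      have := fun h => hnew ⟨rfl, h⟩
      omega
    · rwa [update_of_ne hx'] at hlt
  obtain ⟨u, hu, hux⟩ := hs x' y' hlt'
  by_cases huz : u = z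
  · subst huz
    obtain rfl : y = y' := hz.unique hu
    exact ⟨x, keeps hxz' hx, hxz.trans hux⟩
  · exact ⟨u, keeps huz hu, hux⟩

/-- Pigeonhole: the women who rejected `x` hold pairwise distinct proposers other than `x`. -/
lemma RejectionsJustified.apply_lt (hs : RejectionsJustified L wp s) (x : Fin n) : s x < n := by
  by_contra! hx
  have hheld : ∀ y, ∃ z, Proposes L s z y ∧ SPref (wp y) z x := fun y =>
    hs x y (lt_of_lt_of_le ((L x).symm y).isLt hx)
  choose g hg using hheld
  have hinj : Injective g := fun y y' h => (hg y).1.unique (h ▸ (hg y').1)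
  obtain ⟨y, hy⟩ := Finite.surjective_of_injective hinj x
  exact (hg y).2.ne hy

lemma run_succ (t : ℕ) : run L wp (t + 1) = step L wp (run L wp t) :=
  iterate_succ_apply' _ _ _

lemma monotone_run : Monotone (run L wp) :=
  monotone_nat_of_le_succ fun t => (run_succ t).symm ▸ le_step _

lemma rejectionsJustified_run (t : ℕ) : RejectionsJustified L wp (run L wp t) := by
  induction t with
  | zero => intro x y h; exact absurd h (Nat.not_lt_zero _)
  | succ t ih => rw [run_succ]; exact rejectionsJustified_step ih

lemma exists_terminal_run : ∃ T, Terminal L wp (run L wp T) := by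
  by_contra! h
  have hgrow : ∀ t, t ≤ ∑ x, run L wp t x := by
    intro t
    induction t with
    | zero => exact Nat.zero_le _
    | succ t ih =>
      obtain ⟨z, -, hstep⟩ := exists_step_eq_update (h t)
      have hlt : ∑ x, run L wp t x < ∑ x, run L wp (t + 1) x := by
        refine Finset.sum_lt_sum (fun x _ => monotone_run t.le_succ x) ⟨z, Finset.mem_univ z, ?_⟩
        rw [run_succ, hstep, update_self]
        exact Nat.lt_succ_self _
      omega
  have hbound : ∑ x, run L wp (n * n + 1) x ≤ n * n := by
    simpa using Finset.sum_le_card_nsmul Finset.univ (run L wp (n * n + 1)) n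
      fun x _ => ((rejectionsJustified_run _).apply_lt x).le
  have := hgrow (n * n + 1)
  omega

variable (L wp)

noncomputable def final : Fin n → ℕ := run L wp (Nat.find (exists_terminal_run (L := L) (wp := wp)))

lemma terminal_final : Terminal L wp (final L wp) := Nat.find_spec exists_terminal_run

lemma rejectionsJustified_final : RejectionsJustified L wp (final L wp) :=
  rejectionsJustified_run _

noncomputable def gsMatching : Matching n :=
  Equiv.ofBijective (fun x => L x ⟨final L wp x, (rejectionsJustified_final L wp).apply_lt x⟩) <|
    Finite.injective_iff_bijective.mp fun x _ h =>
      (terminal_final L wp).proposes_inj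
        (y := L x ⟨final L wp x, (rejectionsJustified_final L wp).apply_lt x⟩)
        (by simp [Proposes]) (by simp [Proposes, h])

variable {L wp}

lemma proposes_gsMatching (x : Fin n) : Proposes L (final L wp) x (gsMatching L wp x) := by
  simp [Proposes, gsMatching]

lemma gsMatching_eq_of_proposes {x y : Fin n} (h : Proposes L (final L wp) x y) :
    gsMatching L wp x = y :=
  (proposes_gsMatching x).unique h

lemma isStable_gsMatching : IsStable L wp (gsMatching L wp) := by
  rintro x y ⟨hxy, hyx⟩
  have hrej : ((L x).symm y : ℕ) < final L wp x := (proposes_gsMatching x) ▸ hxy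
  obtain ⟨z, hz, hzx⟩ := rejectionsJustified_final L wp x y hrej
  have hzy : (gsMatching L wp).symm y = z := by
    rw [← gsMatching_eq_of_proposes hz, Equiv.symm_apply_apply]
  rw [hzy] at hyx
  exact hzx.asymm hyx

/-- The first rejection of a man by his `ρ`-partner would exhibit a blocking pair of `ρ`. -/
lemma run_le_rank_of_isStable {ρ : Matching n} (hρ : IsStable L wp ρ) (t : ℕ) (x : Fin n) :
    run L wp t x ≤ (L x).symm (ρ x) := by
  induction t generalizing x with
  | zero => exact Nat.zero_le _
  | succ t ih =>
    rw [run_succ]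
    by_cases h : Terminal L wp (run L wp t)
    · rw [step_eq_self h]; exact ih x
    obtain ⟨z, ⟨x', y, hx', hz, hx'z⟩, hstep⟩ := exists_step_eq_update h
    rw [hstep]
    by_cases hxz : x = z
    · subst hxz
      rw [update_self]
      by_contra! hgt
      have hz' : ((L x).symm y : ℕ) = run L wp t x := hz
      have hρx : ρ x = y := (L x).symm.injective (Fin.ext (by have := ih x; omega))
      have hne : ρ x' ≠ y := fun h' => hx'z.ne (ρ.injective (h'.trans hρx.symm))
      refine hρ x' y ⟨WPref.spref_of_ne ?_ hne.symm, ?_⟩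
      · exact Fin.le_def.mpr (hx'.symm ▸ ih x')
      · rwa [ρ.symm_apply_eq.mpr hρx.symm]
    · rw [update_of_ne hxz]; exact ih x

lemma gsMatching_wpref_of_isStable {ρ : Matching n} (hρ : IsStable L wp ρ) (x : Fin n) :
    WPref (L x) (gsMatching L wp x) (ρ x) :=
  Fin.le_def.mpr ((proposes_gsMatching x).symm ▸ run_le_rank_of_isStable hρ _ x)

lemma run_le_final (t : ℕ) : run L wp t ≤ final L wp := fun x =>
  (proposes_gsMatching x).symm ▸ run_le_rank_of_isStable isStable_gsMatching t x

lemma exists_run_eq_final (x : Fin n) : ∃ t, run L wp t x = final L wp x := ⟨_, rfl⟩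

variable (L wp) in
noncomputable def settleTime (x : Fin n) : ℕ := Nat.find (exists_run_eq_final (L := L) (wp := wp) x)

lemma run_eq_final_of_settleTime_le {x : Fin n} {t : ℕ} (h : settleTime L wp x ≤ t) :
    run L wp t x = final L wp x :=
  le_antisymm (run_le_final t x) (Nat.find_spec (exists_run_eq_final x) ▸ monotone_run h x)

lemma run_lt_final_of_lt_settleTime {x : Fin n} {t : ℕ} (h : t < settleTime L wp x) :
    run L wp t x < final L wp x :=
  lt_of_le_of_ne (run_le_final t x) (Nat.find_min (exists_run_eq_final x) h)

lemma exists_settleTime_eq_succ {x : Fin n} (h : final L wp x ≠ 0) :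
    ∃ t, settleTime L wp x = t + 1 :=
  Nat.exists_eq_succ_of_ne_zero fun h0 => h (run_eq_final_of_settleTime_le h0.le).symm

lemma eq_of_settleTime_eq_succ {x x' : Fin n} {t : ℕ} (hx : settleTime L wp x = t + 1)
    (hx' : settleTime L wp x' = t + 1) : x = x' := by
  have hmoved : ∀ {z}, settleTime L wp z = t + 1 → step L wp (run L wp t) z ≠ run L wp t z := by
    intro z hz
    rw [← run_succ, run_eq_final_of_settleTime_le hz.le]
    exact (run_lt_final_of_lt_settleTime (by omega)).ne'
  exact eq_of_step_apply_ne (hmoved hx) (hmoved hx')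

/-- The blocking lemma of Gale and Sotomayor. Among the men whose `μ`-partner differs from their
final partner, the last one to reach his final partner `y` displaces some `u` from `y`; then `u`
settles later still, so `u` keeps his final partner in `μ`, and `(u, y)` blocks `μ`. -/
lemma exists_blocks_eq_gsMatching {μ : Matching n}
    (hμ : ∀ x, WPref (L x) (μ x) (gsMatching L wp x)) (hne : μ ≠ gsMatching L wp) :
    ∃ u y, Blocks L wp μ u y ∧ μ u = gsMatching L wp u := by
  set ν := gsMatching L wp
  set D := Finset.univ.filter fun x => μ x ≠ ν x
  have hD : ∀ {x}, x ∈ D ↔ μ x ≠ ν x := by simp [D]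
  have hrank : ∀ {x}, x ∈ D → ((L x).symm (μ x) : ℕ) < final L wp x := fun {x} hx =>
    (proposes_gsMatching x) ▸ (hμ x).spref_of_ne (hD.mp hx)
  obtain ⟨x₀, hx₀⟩ : ∃ x, μ x ≠ ν x := by
    by_contra! h
    exact hne (Equiv.ext h)
  obtain ⟨xs, hxs, hmax⟩ := D.exists_max_image (settleTime L wp) ⟨x₀, hD.mpr hx₀⟩
  set y := ν xs
  obtain ⟨t, ht⟩ := exists_settleTime_eq_succ (Nat.ne_zero_of_lt (hrank hxs))
  set x' := μ.symm y
  have hμx' : μ x' = y := μ.apply_symm_apply y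
  have hx'xs : x' ≠ xs := fun h => hD.mp hxs ((congrArg μ h).symm.trans hμx')
  have hx'D : x' ∈ D := hD.mpr fun h => hx'xs (ν.injective (h.symm.trans hμx'))
  have hx'settled : settleTime L wp x' ≤ t := by
    have hle : settleTime L wp x' ≤ settleTime L wp xs := hmax x' hx'D
    have hne : settleTime L wp x' ≠ t + 1 := fun h => hx'xs (eq_of_settleTime_eq_succ h ht)
    omega
  obtain ⟨u, hu, hux'⟩ := rejectionsJustified_run t x' y <| by
    rw [run_eq_final_of_settleTime_le hx'settled]
    simpa [x'] using hrank hx'D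
  have huxs : u ≠ xs := by
    rintro rfl
    exact (run_lt_final_of_lt_settleTime (ht ▸ t.lt_succ_self)).ne
      (hu.symm.trans (proposes_gsMatching u))
  have hu_unsettled : run L wp t u < final L wp u := lt_of_le_of_ne (run_le_final t u)
    fun h => huxs (ν.injective (gsMatching_eq_of_proposes (hu.trans h)))
  have hμu : μ u = ν u := by
    by_contra h
    have hle : settleTime L wp u ≤ settleTime L wp xs := hmax u (hD.mpr h)
    have hgt : ¬ settleTime L wp u ≤ t := fun h => hu_unsettled.ne (run_eq_final_of_settleTime_le h)
    exact huxs (eq_of_settleTime_eq_succ (by omega) ht)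
  refine ⟨u, y, ⟨?_, hux'⟩, hμu⟩
  show ((L u).symm y : ℕ) < (L u).symm (μ u)
  rw [hμu, proposes_gsMatching u, hu]
  exact hu_unsettled

end GaleShapley

open GaleShapley

lemma DA_spec (L wp : Profile n) : IsStable L wp (DA L wp) ∧
    ∀ ρ : Matching n, IsStable L wp ρ → ∀ x, WPref (L x) (DA L wp x) (ρ x) := by
  have h : ∃ μ : Matching n, IsStable L wp μ ∧
      ∀ ρ : Matching n, IsStable L wp ρ → ∀ x, WPref (L x) (μ x) (ρ x) :=
    ⟨gsMatching L wp, isStable_gsMatching, fun _ hρ x => gsMatching_wpref_of_isStable hρ x⟩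
  exact Classical.epsilon_spec h

lemma DA_eq_gsMatching (L wp : Profile n) : DA L wp = gsMatching L wp :=
  Equiv.ext fun x => WPref.antisymm ((DA_spec L wp).2 _ isStable_gsMatching x)
    (gsMatching_wpref_of_isStable (DA_spec L wp).1 x)

lemma exists_blocks_eq_DA {L wp : Profile n} {μ : Matching n}
    (hμ : ∀ x, WPref (L x) (μ x) (DA L wp x)) (hne : μ ≠ DA L wp) :
    ∃ u y, Blocks L wp μ u y ∧ μ u = DA L wp u := by
  rw [DA_eq_gsMatching] at hμ hne ⊢
  exact exists_blocks_eq_gsMatching hμ hne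

section MoveToTop

/-- `Fin.cycleRange r` is the cycle `(0 1 … r)` on ranks: the woman of rank `r` gets rank `0`
and those ranked above her move down by one. -/
def moveToTop (l : Pref n) (w : Fin n) : Pref n :=
  (l.symm.trans (Fin.cycleRange (l.symm w))).symm

variable {l : Pref n} {w a b : Fin n}

lemma moveToTop_symm_apply (l : Pref n) (w a : Fin n) :
    (moveToTop l w).symm a = Fin.cycleRange (l.symm w) (l.symm a) := rfl

lemma Fin.coe_cycleRange_of_ne {r i : Fin n} (h : i ≠ r) :
    (Fin.cycleRange r i : ℕ) = if (i : ℕ) < r then (i : ℕ) + 1 else i := by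
  rcases lt_or_gt_of_ne h with h | h
  · rw [Fin.coe_cycleRange_of_lt h, if_pos (Fin.lt_def.mp h)]
  · rw [Fin.cycleRange_of_gt h, if_neg (Fin.lt_def.not.mp h.not_gt)]

lemma spref_moveToTop_self (h : a ≠ w) : SPref (moveToTop l w) w a := by
  have ha : l.symm a ≠ l.symm w := l.symm.injective.ne h
  show (moveToTop l w).symm w < (moveToTop l w).symm a
  rw [moveToTop_symm_apply, moveToTop_symm_apply, Fin.lt_def,
    Fin.coe_cycleRange_of_le le_rfl, if_pos rfl, Fin.coe_cycleRange_of_ne ha]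
  have : (l.symm a : ℕ) ≠ l.symm w := Fin.val_ne_of_ne ha
  split_ifs <;> omega

lemma spref_moveToTop_iff (ha : a ≠ w) (hb : b ≠ w) :
    SPref (moveToTop l w) a b ↔ SPref l a b := by
  have ha' : l.symm a ≠ l.symm w := l.symm.injective.ne ha
  have hb' : l.symm b ≠ l.symm w := l.symm.injective.ne hb
  show (moveToTop l w).symm a < (moveToTop l w).symm b ↔ l.symm a < l.symm b
  rw [moveToTop_symm_apply, moveToTop_symm_apply, Fin.lt_def, Fin.lt_def,
    Fin.coe_cycleRange_of_ne ha', Fin.coe_cycleRange_of_ne hb']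
  have := Fin.val_ne_of_ne ha'
  have := Fin.val_ne_of_ne hb'
  split_ifs <;> omega

end MoveToTop

lemma isStable_of_isStable_update_moveToTop {p wp : Profile n} {m w : Fin n} {ρ : Matching n}
    (hρ : IsStable (update p m (moveToTop (p m) w)) wp ρ) (hρm : ρ m ≠ w) : IsStable p wp ρ := by
  rintro x y ⟨hxy, hyx⟩
  refine hρ x y ⟨?_, hyx⟩
  rcases eq_or_ne x m with rfl | hx
  · rw [update_self]
    rcases eq_or_ne y w with rfl | hy
    · exact spref_moveToTop_self hρm
    · exact (spref_moveToTop_iff hy hρm).mpr hxy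
  · rwa [update_of_ne hx]

/-- If `m`'s partner changed, the blocking lemma applied to `DA p wp` under the new lists would
give it a blocking pair under the old lists. -/
lemma DA_update_moveToTop_apply_eq {p wp : Profile n} {m w : Fin n} (hμ : DA p wp m ≠ w)
    (hν : DA (update p m (moveToTop (p m) w)) wp m ≠ w) :
    DA (update p m (moveToTop (p m) w)) wp m = DA p wp m := by
  set p' := update p m (moveToTop (p m) w)
  set μ := DA p wp
  set ν := DA p' wp
  have hνp : IsStable p wp ν := isStable_of_isStable_update_moveToTop (DA_spec p' wp).1 hν
  have hμν : ∀ x, WPref (p' x) (μ x) (ν x) := by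
    intro x
    rcases eq_or_ne x m with rfl | hx
    · rw [show p' x = moveToTop (p x) w from update_self _ _ _]
      rcases eq_or_ne (μ x) (ν x) with heq | hne
      · rw [heq]
        exact wpref_refl _ _
      · exact ((spref_moveToTop_iff hμ hν).mpr
          (((DA_spec p wp).2 ν hνp x).spref_of_ne hne)).wpref
    · rw [show p' x = p x from update_of_ne hx _ _]
      exact (DA_spec p wp).2 ν hνp x
  by_contra hne
  obtain ⟨u, y, ⟨huy, hyu⟩, hμu⟩ :=
    exists_blocks_eq_DA hμν fun h => hne (congrArg (· m) h).symm
  rcases eq_or_ne u m with rfl | hu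
  · exact hne hμu.symm
  · exact (DA_spec p wp).1 u y ⟨by rwa [show p' u = p u from update_of_ne hu _ _] at huy, hyu⟩

lemma accManip_moveToTop {mp wp p : Profile n} {m w : Fin n} (hb : Blocks mp wp (DA p wp) m w) :
    AccManip mp wp p m w (moveToTop (p m) w) := by
  set ν := DA (update p m (moveToTop (p m) w)) wp
  rcases eq_or_ne (ν m) w with hν | hν
  · rw [AccManip, ν.symm_apply_eq.mpr hν.symm, hν]
    exact ⟨hb.2, hb.1.wpref⟩
  · have htop : SPref (update p m (moveToTop (p m) w) m) w (ν m) := by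
      rw [update_self]
      exact spref_moveToTop_self hν
    refine ⟨((DA_spec _ wp).1.spref_symm htop).trans hb.2, ?_⟩
    rw [DA_update_moveToTop_apply_eq hb.1.ne.symm hν]
    exact wpref_refl _ _

end

theorem ne_blocking_pairs_outside_P {n : ℕ} (mp wp : Profile n)
    (P : Set (Fin n × Fin n)) (p : Profile n) (hNE : IsNE mp wp P p) :
    ∀ m w, Blocks mp wp (DA p wp) m w → (m, w) ∉ P :=
  fun m w hb hP => hNE m w hP ⟨_, accManip_moveToTop hb⟩
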